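/- Let K ∈ ℝ^{k×d} be (κ,γ)-strongly stable for (A,B) with κ ≥ 1, let M = A + BK, let W ∈ ℝ^{d×d} be symmetric positive semidefinite with Tr(W) ≤ λ², and let X = Σ_{t=0}^∞ M^t W (Mᵀ)^t. Then the block matrix Σˢ = [[X, X Kᵀ],[K X, K X Kᵀ]] ∈ ℝ^{(d+k)×(d+k)} belongs to the SDP feasible set S with parameter ν = 2κ⁴λ²/γ; that is, Σˢ is symmetric positive semidefinite, Tr(Σˢ) ≤ ν, and (Σˢ)_{xx} = (A B) Σˢ (A B)ᵀ + W. -/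

import Mathlib

/-!
Writing `M = H L H⁻¹` gives `‖Mᵗ‖ ≤ κ (1 - γ)ᵗ`. Decomposing `W` into rank-one terms shows
`tr (Mᵗ W Mᵀᵗ) ≤ ‖Mᵗ‖² tr W`, so summing a geometric series yields
`tr X ≤ κ² λ² / (1 - (1 - γ)²) ≤ κ² λ² / γ`. The block matrix equals `P X Pᵀ` with `P = (I; K)`:
it is positive semidefinite, its trace is `tr X + tr (K X Kᵀ) ≤ 2 κ² tr X`, and since `(A B) P = M`
its constraint reduces to the Lyapunov identity `X = M X Mᵀ + W`, which is the series for `X`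
shifted by one term.
-/

open Matrix

/-- Spectral (ℓ₂ operator) norm of a real matrix. -/
noncomputable def sNorm {m n : Type*} [Fintype m] [Fintype n] [DecidableEq n]
    (M : Matrix m n ℝ) : ℝ :=
  ‖LinearMap.toContinuousLinearMap (Matrix.toEuclideanLin M)‖

/-- Frobenius norm of a real matrix. -/
noncomputable def fNorm {m n : Type*} [Fintype m] [Fintype n] (M : Matrix m n ℝ) : ℝ :=
  Real.sqrt (Matrix.trace (Mᵀ * M))

/-- `K` is `(κ,γ)`-strongly stable for the pair `(A,B)`. -/
def StronglyStable {d k : ℕ} (A : Matrix (Fin d) (Fin d) ℝ) (B : Matrix (Fin d) (Fin k) ℝ)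
    (K : Matrix (Fin k) (Fin d) ℝ) (κ γ : ℝ) : Prop :=
  0 < κ ∧ 0 < γ ∧ γ ≤ 1 ∧ sNorm K ≤ κ ∧
    ∃ H L : Matrix (Fin d) (Fin d) ℝ, IsUnit H ∧ A + B * K = H * L * H⁻¹ ∧
      sNorm L ≤ 1 - γ ∧ sNorm H * sNorm H⁻¹ ≤ κ

/-- The feasible set of the SDP relaxation of LQ control. -/
def Feasible {d k : ℕ} (A : Matrix (Fin d) (Fin d) ℝ) (B : Matrix (Fin d) (Fin k) ℝ)
    (W : Matrix (Fin d) (Fin d) ℝ) (ν : ℝ)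
    (Sg : Matrix (Fin d ⊕ Fin k) (Fin d ⊕ Fin k) ℝ) : Prop :=
  Sg.PosSemidef ∧ Sg.trace ≤ ν ∧
    Sg.toBlocks₁₁ = fromCols A B * Sg * (fromCols A B)ᵀ + W

/-- The controller `K = Σ_{xu}ᵀ Σ_{xx}⁻¹` extracted from an SDP point. -/
noncomputable def extractK {d k : ℕ} (Sg : Matrix (Fin d ⊕ Fin k) (Fin d ⊕ Fin k) ℝ) :
    Matrix (Fin k) (Fin d) ℝ :=
  (Sg.toBlocks₁₂)ᵀ * (Sg.toBlocks₁₁)⁻¹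

/-- The exploration covariance `V = Σ_{uu} - K Σ_{xx} Kᵀ` extracted from an SDP point. -/
noncomputable def extractV {d k : ℕ} (Sg : Matrix (Fin d ⊕ Fin k) (Fin d ⊕ Fin k) ℝ) :
    Matrix (Fin k) (Fin k) ℝ :=
  Sg.toBlocks₂₂ - extractK Sg * Sg.toBlocks₁₁ * (extractK Sg)ᵀ

lemma dotProduct_self_eq_norm_sq {n : Type*} [Fintype n] (v : n → ℝ) :
    v ⬝ᵥ v = ‖(EuclideanSpace.equiv n ℝ).symm v‖ ^ 2 := by
  rw [EuclideanSpace.norm_sq_eq]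
  simp [dotProduct, sq]

section SpectralNorm

open scoped Matrix.Norms.L2Operator

variable {m n : Type*} [Fintype m] [Fintype n] [DecidableEq n]

lemma sNorm_eq_l2_opNorm (A : Matrix m n ℝ) : sNorm A = ‖A‖ := rfl

lemma sNorm_nonneg (A : Matrix m n ℝ) : 0 ≤ sNorm A := norm_nonneg A

lemma mulVec_dotProduct_mulVec_le (A : Matrix m n ℝ) (x : n → ℝ) :
    (A *ᵥ x) ⬝ᵥ (A *ᵥ x) ≤ sNorm A ^ 2 * (x ⬝ᵥ x) := by
  rw [dotProduct_self_eq_norm_sq, dotProduct_self_eq_norm_sq, ← mul_pow]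
  exact pow_le_pow_left₀ (norm_nonneg _) (A.l2_opNorm_mulVec _) 2

lemma trace_mul_mul_transpose_le (A : Matrix m n ℝ) {W : Matrix n n ℝ} (hW : W.PosSemidef) :
    (A * W * Aᵀ).trace ≤ sNorm A ^ 2 * W.trace := by
  obtain ⟨r, v, rfl⟩ := posSemidef_iff_eq_sum_vecMulVec.mp hW
  simp only [star_trivial, Matrix.mul_sum, Matrix.sum_mul, trace_sum, Finset.mul_sum]
  gcongr with i
  rw [mul_vecMulVec, vecMulVec_mul, vecMul_transpose, trace_vecMulVec, trace_vecMulVec]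
  exact mulVec_dotProduct_mulVec_le A (v i)

end SpectralNorm

lemma norm_units_conj_pow_le {R : Type*} [SeminormedRing R] (u : Rˣ) (x : R) (t : ℕ) :
    ‖((u : R) * x * ↑u⁻¹) ^ t‖ ≤ ‖(u : R)‖ * ‖(↑u⁻¹ : R)‖ * ‖x‖ ^ t := by
  rw [Units.conj_pow]
  cases t with
  | zero => simpa only [pow_zero, mul_one] using norm_mul_le (u : R) ↑u⁻¹
  | succ t =>
    calc ‖(u : R) * x ^ (t + 1) * ↑u⁻¹‖ ≤ ‖(u : R)‖ * ‖x ^ (t + 1)‖ * ‖(↑u⁻¹ : R)‖ :=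
          (norm_mul_le _ _).trans (mul_le_mul_of_nonneg_right (norm_mul_le _ _) (norm_nonneg _))
      _ ≤ ‖(u : R)‖ * ‖x‖ ^ (t + 1) * ‖(↑u⁻¹ : R)‖ := by gcongr; exact norm_pow_le' x t.succ_pos
      _ = ‖(u : R)‖ * ‖(↑u⁻¹ : R)‖ * ‖x‖ ^ (t + 1) := by ring

lemma sNorm_pow_le_of_eq_conj {n : Type*} [Fintype n] [DecidableEq n]
    {M H L : Matrix n n ℝ} (hH : IsUnit H) (hM : M = H * L * H⁻¹) (t : ℕ) :
    sNorm (M ^ t) ≤ sNorm H * sNorm H⁻¹ * sNorm L ^ t := by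
  open scoped Matrix.Norms.L2Operator in
  simp only [sNorm_eq_l2_opNorm]
  simpa only [hM, IsUnit.unit_spec, coe_units_inv] using norm_units_conj_pow_le hH.unit L t

theorem HasSum.eq_mul_mul_add {R : Type*} [Ring R] [TopologicalSpace R] [IsTopologicalRing R]
    [T2Space R] {a b w x : R} (h : HasSum (fun t : ℕ => a ^ t * w * b ^ t) x) :
    x = a * x * b + w := by
  have hstep :
      (fun t : ℕ => a ^ (t + 1) * w * b ^ (t + 1)) = fun t => a * (a ^ t * w * b ^ t) * b :=
    funext fun t => by simp only [pow_succ' a, pow_succ b, mul_assoc]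
  have hshift : HasSum (fun t : ℕ => a * (a ^ t * w * b ^ t) * b) (x - w) := by
    simpa only [hstep, Finset.sum_range_one, pow_zero, one_mul, mul_one]
      using (hasSum_nat_add_iff' 1).mpr h
  rw [((h.mul_left a).mul_right b).unique hshift]
  abel

theorem Matrix.PosSemidef.of_hasSum {ι n : Type*} [Fintype n] {f : ι → Matrix n n ℝ}
    {X : Matrix n n ℝ} (hX : HasSum f X) (hf : ∀ i, (f i).PosSemidef) : X.PosSemidef := by
  refine .of_dotProduct_mulVec_nonneg ?_ fun x => ?_
  · have hfH : (fun i => (f i)ᴴ) = f := funext fun i => (hf i).isHermitian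
    exact hX.matrix_conjTranspose.unique (hfH ▸ hX)
  · have hquad := hX.map
      (AddMonoidHom.mk' (fun S : Matrix n n ℝ => star x ⬝ᵥ (S *ᵥ x))
        fun S T => by simp only [add_mulVec, dotProduct_add])
      (continuous_const.dotProduct (continuous_id.matrix_mulVec continuous_const))
    exact hquad.nonneg fun i => (hf i).dotProduct_mulVec_nonneg x

section Lyapunov

variable {n : Type*} [Fintype n] [DecidableEq n] {M W X : Matrix n n ℝ}

lemma posSemidef_pow_mul_mul_transpose_pow (hW : W.PosSemidef) (t : ℕ) :
    (M ^ t * W * Mᵀ ^ t).PosSemidef := by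
  simpa only [conjTranspose_eq_transpose_of_trivial, transpose_pow]
    using hW.mul_mul_conjTranspose_same (M ^ t)

lemma trace_le_of_hasSum_pow_mul_mul_transpose_pow (hW : W.PosSemidef)
    (hX : HasSum (fun t : ℕ => M ^ t * W * Mᵀ ^ t) X) {c ρ : ℝ} (hρ0 : 0 ≤ ρ) (hρ1 : ρ < 1)
    (hM : ∀ t, sNorm (M ^ t) ≤ c * ρ ^ t) :
    X.trace ≤ c ^ 2 * W.trace * (1 - ρ ^ 2)⁻¹ := by
  have htrace := hX.map (traceAddMonoidHom n ℝ) continuous_id.matrix_trace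
  have hgeom := (hasSum_geometric_of_lt_one (sq_nonneg ρ) (by nlinarith)).mul_left
    (c ^ 2 * W.trace)
  refine hasSum_le (fun t => ?_) htrace hgeom
  calc (M ^ t * W * Mᵀ ^ t).trace ≤ sNorm (M ^ t) ^ 2 * W.trace := by
        simpa only [transpose_pow] using trace_mul_mul_transpose_le (M ^ t) hW
    _ ≤ (c * ρ ^ t) ^ 2 * W.trace := by
        gcongr
        · exact hW.trace_nonneg
        · exact sNorm_nonneg _
        · exact hM t
    _ = c ^ 2 * W.trace * (ρ ^ 2) ^ t := by ring

end Lyapunov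

lemma fromBlocks_eq_fromRows_one_mul_mul_transpose {d k R : Type*} [Fintype d] [DecidableEq d]
    [CommSemiring R] (X : Matrix d d R) (K : Matrix k d R) :
    fromBlocks X (X * Kᵀ) (K * X) (K * X * Kᵀ) = fromRows 1 K * X * (fromRows 1 K)ᵀ := by
  rw [transpose_fromRows, transpose_one, fromRows_mul, fromRows_mul_fromCols, Matrix.one_mul,
    Matrix.mul_one, Matrix.mul_one]

lemma trace_fromBlocks {d k R : Type*} [Fintype d] [Fintype k] [AddCommMonoid R]
    (A : Matrix d d R) (B : Matrix d k R) (C : Matrix k d R) (D : Matrix k k R) :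
    (fromBlocks A B C D).trace = A.trace + D.trace := by
  simp [Matrix.trace, Fintype.sum_sum_type]

namespace StronglyStable

variable {d k : ℕ} {A : Matrix (Fin d) (Fin d) ℝ} {B : Matrix (Fin d) (Fin k) ℝ}
  {K : Matrix (Fin k) (Fin d) ℝ} {κ γ : ℝ}

lemma sNorm_pow_le (h : StronglyStable A B K κ γ) (t : ℕ) :
    sNorm ((A + B * K) ^ t) ≤ κ * (1 - γ) ^ t := by
  obtain ⟨hκ, -, -, -, H, L, hH, hHL, hL, hHn⟩ := h
  exact (sNorm_pow_le_of_eq_conj hH hHL t).trans <|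
    mul_le_mul hHn (pow_le_pow_left₀ (sNorm_nonneg L) hL t) (pow_nonneg (sNorm_nonneg L) t) hκ.le

lemma trace_le_of_hasSum (h : StronglyStable A B K κ γ) {W X : Matrix (Fin d) (Fin d) ℝ}
    (hW : W.PosSemidef) (hX : HasSum (fun t : ℕ => (A + B * K) ^ t * W * (A + B * K)ᵀ ^ t) X) :
    X.trace ≤ κ ^ 2 * W.trace / γ := by
  have hMpow := h.sNorm_pow_le
  obtain ⟨-, hγ0, hγ1, -⟩ := h
  have hγ : γ ≤ 1 - (1 - γ) ^ 2 := by nlinarith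
  calc X.trace ≤ κ ^ 2 * W.trace * (1 - (1 - γ) ^ 2)⁻¹ :=
        trace_le_of_hasSum_pow_mul_mul_transpose_pow hW hX (by linarith) (by linarith) hMpow
    _ ≤ κ ^ 2 * W.trace * γ⁻¹ := by
        gcongr
        exact mul_nonneg (sq_nonneg κ) hW.trace_nonneg
    _ = κ ^ 2 * W.trace / γ := rfl

end StronglyStable

/-- the steady-state covariance block matrix induced by a (κ,γ)-strongly
stable controller is feasible for the SDP with parameter `ν = 2κ⁴λ²/γ`. -/
theorem stmt7 {d k : ℕ} (A : Matrix (Fin d) (Fin d) ℝ) (B : Matrix (Fin d) (Fin k) ℝ)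
    (K : Matrix (Fin k) (Fin d) ℝ) (κ γ lam : ℝ) (hκ : 1 ≤ κ)
    (h : StronglyStable A B K κ γ)
    (M : Matrix (Fin d) (Fin d) ℝ) (hM : M = A + B * K)
    (W : Matrix (Fin d) (Fin d) ℝ) (hW : W.PosSemidef) (htrW : W.trace ≤ lam ^ 2)
    (X : Matrix (Fin d) (Fin d) ℝ)
    (hX : HasSum (fun t : ℕ => M ^ t * W * (Mᵀ) ^ t) X) :
    Feasible A B W (2 * κ ^ 4 * lam ^ 2 / γ)
      (fromBlocks X (X * Kᵀ) (K * X) (K * X * Kᵀ)) := by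
  subst hM
  have hXpsd : X.PosSemidef := .of_hasSum hX (posSemidef_pow_mul_mul_transpose_pow hW)
  have htrX := h.trace_le_of_hasSum hW hX
  obtain ⟨-, hγ0, -, hK, -⟩ := h
  have htrKXK : (K * X * Kᵀ).trace ≤ κ ^ 2 * X.trace :=
    (trace_mul_mul_transpose_le K hXpsd).trans <|
      mul_le_mul_of_nonneg_right (pow_le_pow_left₀ (sNorm_nonneg K) hK 2) hXpsd.trace_nonneg
  have hblocks := fromBlocks_eq_fromRows_one_mul_mul_transpose X K
  refine ⟨?_, ?_, ?_⟩
  · simpa only [hblocks, conjTranspose_eq_transpose_of_trivial]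
      using hXpsd.mul_mul_conjTranspose_same _
  · calc _ = X.trace + (K * X * Kᵀ).trace := trace_fromBlocks _ _ _ _
      _ ≤ 2 * κ ^ 2 * X.trace := by
          nlinarith [mul_le_mul_of_nonneg_right (one_le_pow₀ (n := 2) hκ) hXpsd.trace_nonneg]
      _ ≤ 2 * κ ^ 2 * (κ ^ 2 * W.trace / γ) := by gcongr
      _ ≤ 2 * κ ^ 2 * (κ ^ 2 * lam ^ 2 / γ) := by gcongr
      _ = 2 * κ ^ 4 * lam ^ 2 / γ := by ring
  · have hAB : fromCols A B * fromRows (1 : Matrix (Fin d) (Fin d) ℝ) K = A + B * K := by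
      rw [Matrix.fromCols_mul_fromRows, Matrix.mul_one]
    rw [toBlocks_fromBlocks₁₁, hblocks]
    convert hX.eq_mul_mul_add using 2
    rw [← hAB, transpose_mul]
    simp only [Matrix.mul_assoc]
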